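/- Let w be a quaternion with ‖w‖ = 1 and w ∉ ℝ (i.e. its imaginary part Im w := w − re w is nonzero). Set M := Im w / ‖Im w‖ and φ := arccos(re w), so that 0 < φ < π. Then the set of purely imaginary logarithms of w, namely {A ∈ ℍ : re A = 0 and exp A = w}, equals {(φ + 2πn)·M : n ∈ ℤ}; in particular this set is countably infinite. (Content of the paper's Proposition 2.10.2: the logarithm on the quaternions has exactly countably many branches, enumerated by n ∈ ℤ.) -/

import Mathlib

/-!
The imaginary part of `exp A` is a real multiple of `A` when `re A = 0`, so every purely imaginary
logarithm of `w` lies on the line `ℝ • M`. On that line the exponential obeys Euler's formula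
`exp (s • M) = cos s + sin s • M`, so `exp (s • M) = w` means `cos s = re w` and `sin s = ‖Im w‖`,
whose solutions are `s = φ + 2πn`.
-/

open Quaternion Real

theorem Real.exists_int_eq_add_two_pi_mul_of_cos_eq_of_sin_eq {s t : ℝ} (hc : cos s = cos t)
    (hs : sin s = sin t) : ∃ n : ℤ, s = t + 2 * π * n := by
  obtain ⟨n, hn⟩ := Real.Angle.angle_eq_iff_two_pi_dvd_sub.mp (Real.Angle.cos_sin_inj hc hs)
  exact ⟨n, by linarith⟩

theorem norm_inv_norm_smul_of_ne_zero {E : Type*} [NormedAddCommGroup E] [NormedSpace ℝ E]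
    {x : E} (hx : x ≠ 0) : ‖‖x‖⁻¹ • x‖ = 1 := by
  rw [norm_smul, norm_inv, norm_norm, inv_mul_cancel₀ (norm_ne_zero_iff.mpr hx)]

namespace Quaternion

open NormedSpace

theorem sq_norm_eq_sq_re_add_sq_norm_im (q : ℍ[ℝ]) : ‖q‖ ^ 2 = q.re ^ 2 + ‖q.im‖ ^ 2 := by
  simp only [sq, ← normSq_eq_norm_mul_self, normSq_def', re_im, imI_im, imJ_im, imK_im]
  ring

theorem im_eq_self_of_re_eq_zero {q : ℍ[ℝ]} (hq : q.re = 0) : q.im = q := by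
  rw [← sub_re_self, hq, coe_zero, sub_zero]

theorem exp_smul_of_re_eq_zero_of_norm_eq_one {u : ℍ[ℝ]} (hre : u.re = 0) (hu : ‖u‖ = 1)
    (s : ℝ) : exp (s • u) = ↑(cos s) + sin s • u := by
  rcases eq_or_ne s 0 with rfl | hs
  · simp
  have hsinc : sin |s| / |s| * s = sin s := by
    rcases abs_cases s with ⟨h, _⟩ | ⟨h, _⟩
    · rw [h]; field_simp
    · rw [h, sin_neg]; field_simp
  rw [exp_of_re_eq_zero _ (by simp [hre]), norm_smul, hu, mul_one, Real.norm_eq_abs, cos_abs,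
    smul_smul, hsinc]

theorem exp_smul_eq_exp_smul_iff {u : ℍ[ℝ]} (hre : u.re = 0) (hu : ‖u‖ = 1) {s t : ℝ} :
    exp (s • u) = exp (t • u) ↔ ∃ n : ℤ, s = t + 2 * π * n := by
  simp only [exp_smul_of_re_eq_zero_of_norm_eq_one hre hu]
  constructor
  · intro h
    have hcos : cos s = cos t := by simpa [hre] using congrArg (·.re) h
    have hsin : sin s = sin t := by
      have him : sin s • u = sin t • u := by
        simpa [im_eq_self_of_re_eq_zero hre] using congrArg (·.im) h
      exact smul_left_injective ℝ (ne_zero_of_norm_ne_zero (by simp [hu])) him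
    exact Real.exists_int_eq_add_two_pi_mul_of_cos_eq_of_sin_eq hcos hsin
  · rintro ⟨n, rfl⟩
    rw [mul_comm (2 * π), cos_add_int_mul_two_pi, sin_add_int_mul_two_pi]

theorem exists_eq_smul_im_exp {A : ℍ[ℝ]} (hA : A.re = 0) (h : (exp A).im ≠ 0) :
    ∃ s : ℝ, A = s • (exp A).im := by
  have him : (exp A).im = (sin ‖A‖ / ‖A‖) • A := by
    simp [exp_of_re_eq_zero A hA, im_eq_self_of_re_eq_zero hA]
  rw [him] at h ⊢
  exact ⟨(sin ‖A‖ / ‖A‖)⁻¹, (inv_smul_smul₀ (left_ne_zero_of_smul h) A).symm⟩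

theorem setOf_re_eq_zero_exp_eq {u w : ℍ[ℝ]} (hre : u.re = 0) (hu : ‖u‖ = 1) {φ : ℝ}
    (hsin : sin φ ≠ 0) (hw : exp (φ • u) = w) :
    {A : ℍ[ℝ] | A.re = 0 ∧ exp A = w} = Set.range fun n : ℤ => (φ + 2 * π * n) • u := by
  subst hw
  ext A
  constructor
  · rintro ⟨hAre, hAexp⟩
    have him : (exp A).im = sin φ • u := by
      simp [hAexp, exp_smul_of_re_eq_zero_of_norm_eq_one hre hu, im_eq_self_of_re_eq_zero hre]
    have him_ne : (exp A).im ≠ 0 := him ▸ smul_ne_zero hsin (ne_zero_of_norm_ne_zero (by simp [hu]))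
    obtain ⟨s, rfl⟩ : ∃ s : ℝ, A = s • u := by
      obtain ⟨s, hs⟩ := exists_eq_smul_im_exp hAre him_ne
      exact ⟨s * sin φ, by rw [hs, him, smul_smul]⟩
    obtain ⟨n, rfl⟩ := (exp_smul_eq_exp_smul_iff hre hu).mp hAexp
    exact ⟨n, rfl⟩
  · rintro ⟨n, rfl⟩
    exact ⟨by simp [hre], (exp_smul_eq_exp_smul_iff hre hu).mpr ⟨n, rfl⟩⟩

theorem sin_arccos_re {w : ℍ[ℝ]} (hw : ‖w‖ = 1) : sin (arccos w.re) = ‖w.im‖ := by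
  have hpyth := sq_norm_eq_sq_re_add_sq_norm_im w
  rw [hw] at hpyth
  rw [sin_arccos, show 1 - w.re ^ 2 = ‖w.im‖ ^ 2 by linarith, sqrt_sq (norm_nonneg _)]

theorem exp_arccos_re_smul {w : ℍ[ℝ]} (hw : ‖w‖ = 1) (him : w.im ≠ 0) :
    exp (arccos w.re • (‖w.im‖⁻¹ • w.im)) = w := by
  have hpyth := sq_norm_eq_sq_re_add_sq_norm_im w
  rw [hw] at hpyth
  have hcos : cos (arccos w.re) = w.re :=
    cos_arccos (by nlinarith [sq_nonneg ‖w.im‖]) (by nlinarith [sq_nonneg ‖w.im‖])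
  rw [exp_smul_of_re_eq_zero_of_norm_eq_one (by simp) (norm_inv_norm_smul_of_ne_zero him), hcos,
    sin_arccos_re hw, smul_inv_smul₀ (norm_ne_zero_iff.mpr him), re_add_im]

end Quaternion

theorem quaternion_log_branches (w : Quaternion ℝ) (hw : ‖w‖ = 1)
    (him : w.im ≠ 0) :
    {A : Quaternion ℝ | A.re = 0 ∧ NormedSpace.exp A = w} =
      {A : Quaternion ℝ | ∃ n : ℤ,
        A = (Real.arccos w.re + 2 * π * n) • (‖w.im‖⁻¹ • w.im)} ∧
    Set.Countable {A : Quaternion ℝ | A.re = 0 ∧ NormedSpace.exp A = w} ∧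
    Set.Infinite {A : Quaternion ℝ | A.re = 0 ∧ NormedSpace.exp A = w} := by
  have hM : ‖‖w.im‖⁻¹ • w.im‖ = 1 := norm_inv_norm_smul_of_ne_zero him
  have hlogs := setOf_re_eq_zero_exp_eq (by simp) hM
    (sin_arccos_re hw ▸ norm_ne_zero_iff.mpr him) (exp_arccos_re_smul hw him)
  refine ⟨hlogs.trans ?_, hlogs ▸ Set.countable_range _, hlogs ▸ Set.infinite_range_of_injective ?_⟩
  · ext
    simp [eq_comm]
  · intro m n hmn
    have hcoeff := smul_left_injective ℝ (ne_zero_of_norm_ne_zero (by simp [hM])) hmn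
    simpa [pi_ne_zero] using hcoeff
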